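/- arXiv:1207.5722 — 2 statements merged into one kernel-verified Lean document; each statement's English description precedes it below -/
import Mathlib

section
/- Let G=(V,E) be a connected undirected graph and T ⊆ V of even cardinality. Let x* : E → ℝ satisfy x* ≥ 0 and x*(δ(S)) ≥ 2 for every T-even set S with ∅ ⊊ S ⊊ V. Let J be a spanning tree of G, let D be the set of wrong-degree nodes of J with respect to T, and let α, β ≥ 0 with α + 2β ≥ 1. Then (α·χ(J) + β·x*)(δ(U)) ≥ 1 holds for every set U with ∅ ⊊ U ⊊ V such that either (i) U is T-even, or (ii) U is T-odd and D-odd and x*(δ(U)) ≥ (1−2α)/β (with β > 0 in case (ii)). -/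
/-!
The vector `α χ(J) + β x*` splits over the cut `δ(U)` as `α |δ_J(U)| + β x*(δ(U))`. Since
`J` is connected, `|δ_J(U)| ≥ 1`, which together with `x*(δ(U)) ≥ 2` settles a `T`-even `U`.
For a `T`-odd and `D`-odd `U`, the degree of each node of `J` is congruent mod 2 to
`[v ∈ T] + [v ∈ D]`, so summing degrees over `U` shows that `|δ_J(U)|` is even, hence at least
2, and `2α + β x*(δ(U)) ≥ 1` is exactly the hypothesis on `x*(δ(U))`.
-/

open Finset
open scoped Classical

variable {V : Type*}

/-- `x(δ(U))`: the total `x`-value of the edges of `G` with exactly one endpoint in `U`. -/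
noncomputable def xCut [Fintype V] [DecidableEq V] (G : SimpleGraph V)
    (x : Sym2 V → ℝ) (U : Finset V) : ℝ :=
  ∑ u ∈ U, ∑ w ∈ Uᶜ, if G.Adj u w then x s(u, w) else 0

/-- The degree of a vertex `v` in a simple graph `J`. -/
noncomputable def treeDeg (J : SimpleGraph V) (v : V) : ℕ :=
  Nat.card {w // J.Adj v w}

noncomputable def cutCard [Fintype V] [DecidableEq V] (J : SimpleGraph V) (U : Finset V) :
    ℕ :=
  ∑ u ∈ U, ∑ w ∈ Uᶜ, if J.Adj u w then 1 else 0

lemma xCut_linear_comb [Fintype V] [DecidableEq V] (G : SimpleGraph V) (f g : Sym2 V → ℝ)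
    (a b : ℝ) (U : Finset V) :
    xCut G (fun e => a * f e + b * g e) U = a * xCut G f U + b * xCut G g U := by
  simp only [xCut, Finset.mul_sum, ← Finset.sum_add_distrib]
  refine Finset.sum_congr rfl fun u _ => Finset.sum_congr rfl fun w _ => ?_
  split_ifs <;> ring

lemma xCut_indicator_edgeSet [Fintype V] [DecidableEq V] {G J : SimpleGraph V} (hJG : J ≤ G)
    (U : Finset V) :
    xCut G (fun e => if e ∈ J.edgeSet then 1 else 0) U = cutCard J U := by
  simp only [xCut, cutCard, Nat.cast_sum, Nat.cast_ite, Nat.cast_one, Nat.cast_zero]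
  refine Finset.sum_congr rfl fun u _ => Finset.sum_congr rfl fun w _ => ?_
  by_cases h : J.Adj u w
  · simp [h, hJG h]
  · simp [h]

lemma one_le_cutCard [Fintype V] [DecidableEq V] {J : SimpleGraph V} (hJ : J.Connected)
    {U : Finset V} (hU1 : U.Nonempty) (hU2 : U ≠ univ) : 1 ≤ cutCard J U := by
  obtain ⟨u, hu⟩ := hU1
  obtain ⟨w, hw⟩ : ∃ w, w ∉ U := by simpa [Finset.eq_univ_iff_forall] using hU2
  obtain ⟨d, -, hdU, hdUc⟩ := (hJ.preconnected u w).some.exists_boundary_dart (U : Set V)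
    (by simpa using hu) (by simpa using hw)
  calc 1 = if J.Adj d.fst d.snd then 1 else 0 := by simp [d.adj]
    _ ≤ ∑ w ∈ Uᶜ, if J.Adj d.fst w then 1 else 0 :=
        Finset.single_le_sum (f := fun w => if J.Adj d.fst w then 1 else 0)
          (fun _ _ => Nat.zero_le _) (by simpa using hdUc)
    _ ≤ cutCard J U :=
        Finset.single_le_sum (f := fun u => ∑ w ∈ Uᶜ, if J.Adj u w then 1 else 0)
          (fun _ _ => Nat.zero_le _) (by simpa using hdU)

lemma even_sum_sum_of_symm [DecidableEq V] (f : V → V → ℕ) (hsymm : ∀ u w, f u w = f w u)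
    (hdiag : ∀ u, f u u = 0) (s : Finset V) : Even (∑ u ∈ s, ∑ w ∈ s, f u w) := by
  induction s using Finset.induction with
  | empty => simp
  | @insert a s ha ih =>
    have hrow : ∑ u ∈ s, ∑ w ∈ insert a s, f u w
        = ∑ w ∈ s, f a w + ∑ u ∈ s, ∑ w ∈ s, f u w := by
      simp only [Finset.sum_insert ha, Finset.sum_add_distrib, hsymm _ a]
    rw [Finset.sum_insert ha, Finset.sum_insert ha, hrow, hdiag]
    obtain ⟨k, hk⟩ := ih
    exact ⟨∑ w ∈ s, f a w + k, by omega⟩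

lemma treeDeg_eq_sum [Fintype V] (J : SimpleGraph V) (v : V) :
    treeDeg J v = ∑ w, if J.Adj v w then 1 else 0 := by
  rw [treeDeg, Nat.card_eq_fintype_card, Fintype.card_subtype, Finset.card_filter]

/-- The degree sum over `U` counts the edges inside `U` twice and those of the cut once. -/
lemma cutCard_cast_zmod_two [Fintype V] [DecidableEq V] (J : SimpleGraph V) (U : Finset V) :
    (cutCard J U : ZMod 2) = ∑ v ∈ U, (treeDeg J v : ZMod 2) := by
  have hdeg : ∑ v ∈ U, treeDeg J v
      = ∑ u ∈ U, ∑ w ∈ U, (if J.Adj u w then 1 else 0) + cutCard J U := by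
    rw [cutCard, ← Finset.sum_add_distrib]
    exact Finset.sum_congr rfl fun v _ => by rw [treeDeg_eq_sum, Finset.sum_add_sum_compl]
  have hinner := even_sum_sum_of_symm (fun u w => if J.Adj u w then 1 else 0)
    (fun u w => by simp [SimpleGraph.adj_comm]) (fun u => by simp) U
  rw [← Nat.cast_sum, hdeg, Nat.cast_add, (ZMod.natCast_eq_zero_iff_even).mpr hinner, zero_add]

def IsWrongDegreeSet (J : SimpleGraph V) (T D : Finset V) : Prop :=
  ∀ v, v ∈ D ↔ ((v ∈ T ∧ Even (treeDeg J v)) ∨ (v ∉ T ∧ Odd (treeDeg J v)))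

lemma treeDeg_cast_zmod_two [DecidableEq V] {J : SimpleGraph V} {T D : Finset V}
    (hD : IsWrongDegreeSet J T D) (v : V) :
    (treeDeg J v : ZMod 2) = (if v ∈ T then 1 else 0) + (if v ∈ D then 1 else 0) := by
  have hDv := hD v
  by_cases hT : v ∈ T <;> by_cases hd : Even (treeDeg J v)
  · rw [(ZMod.natCast_eq_zero_iff_even).mpr hd, if_pos hT, if_pos (by tauto)]; decide
  · rw [(ZMod.natCast_eq_one_iff_odd).mpr (Nat.not_even_iff_odd.mp hd), if_pos hT,
      if_neg (by tauto), add_zero]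
  · rw [(ZMod.natCast_eq_zero_iff_even).mpr hd, if_neg hT, if_neg (by simp_all), add_zero]
  · rw [(ZMod.natCast_eq_one_iff_odd).mpr (Nat.not_even_iff_odd.mp hd), if_neg hT,
      if_pos (by simp_all [Nat.not_even_iff_odd]), zero_add]

lemma even_cutCard_of_odd_of_odd [Fintype V] [DecidableEq V] {J : SimpleGraph V}
    {T D : Finset V} (hD : IsWrongDegreeSet J T D) {U : Finset V}
    (hUT : Odd (U ∩ T).card) (hUD : Odd (U ∩ D).card) :
    Even (cutCard J U) := by
  have hcount : ∀ S : Finset V,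
      ∑ v ∈ U, (if v ∈ S then 1 else 0 : ZMod 2) = ((U ∩ S).card : ZMod 2) :=
    fun S => by rw [Finset.sum_boole, ← Finset.filter_mem_eq_inter]
  rw [← ZMod.natCast_eq_zero_iff_even, cutCard_cast_zmod_two,
    Finset.sum_congr rfl fun v _ => treeDeg_cast_zmod_two hD v, Finset.sum_add_distrib,
    hcount, hcount, (ZMod.natCast_eq_one_iff_odd).mpr hUT,
    (ZMod.natCast_eq_one_iff_odd).mpr hUD]
  decide

theorem stmt7_general {V : Type*} [Fintype V] [DecidableEq V]
    (G : SimpleGraph V)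
    (T : Finset V)
    (x : Sym2 V → ℝ)
    (heven : ∀ S : Finset V, S.Nonempty → S ≠ univ → Even ((S ∩ T).card) →
      2 ≤ xCut G x S)
    (J : SimpleGraph V) (hJG : J ≤ G) (hJtree : J.IsTree)
    (D : Finset V)
    (hD : ∀ v, v ∈ D ↔ ((v ∈ T ∧ Even (treeDeg J v)) ∨ (v ∉ T ∧ Odd (treeDeg J v))))
    (α β : ℝ) (hα : 0 ≤ α) (hβ : 0 ≤ β) (hαβ : 1 ≤ α + 2 * β)
    (U : Finset V) (hU1 : U.Nonempty) (hU2 : U ≠ univ)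
    (hcase : Even ((U ∩ T).card) ∨
      (Odd ((U ∩ T).card) ∧ Odd ((U ∩ D).card) ∧ 0 < β ∧
        (1 - 2 * α) / β ≤ xCut G x U)) :
    1 ≤ xCut G (fun e => α * (if e ∈ J.edgeSet then 1 else 0) + β * x e) U := by
  rw [xCut_linear_comb, xCut_indicator_edgeSet hJG]
  have hcut : 1 ≤ cutCard J U := one_le_cutCard hJtree.connected hU1 hU2
  rcases hcase with hUT | ⟨hUT, hUD, hβpos, hxU⟩
  · have hc : (1 : ℝ) ≤ cutCard J U := by exact_mod_cast hcut
    nlinarith [heven U hU1 hU2 hUT]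
  · obtain ⟨k, hk⟩ := even_cutCard_of_odd_of_odd hD hUT hUD
    have hc : (2 : ℝ) ≤ cutCard J U := by exact_mod_cast (by omega : 2 ≤ cutCard J U)
    have hβx : 1 - 2 * α ≤ β * xCut G x U := by rwa [div_le_iff₀' hβpos] at hxU
    nlinarith

theorem stmt7 {V : Type*} [Fintype V] [DecidableEq V]
    (G : SimpleGraph V) (hG : G.Connected)
    (T : Finset V) (hTeven : Even T.card)
    (x : Sym2 V → ℝ) (hx0 : ∀ e ∈ G.edgeSet, 0 ≤ x e)
    (heven : ∀ S : Finset V, S.Nonempty → S ≠ univ → Even ((S ∩ T).card) →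
      2 ≤ xCut G x S)
    (J : SimpleGraph V) (hJG : J ≤ G) (hJtree : J.IsTree)
    (D : Finset V)
    (hD : ∀ v, v ∈ D ↔ ((v ∈ T ∧ Even (treeDeg J v)) ∨ (v ∉ T ∧ Odd (treeDeg J v))))
    (α β : ℝ) (hα : 0 ≤ α) (hβ : 0 ≤ β) (hαβ : 1 ≤ α + 2 * β)
    (U : Finset V) (hU1 : U.Nonempty) (hU2 : U ≠ univ)
    (hcase : Even ((U ∩ T).card) ∨
      (Odd ((U ∩ T).card) ∧ Odd ((U ∩ D).card) ∧ 0 < β ∧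
        (1 - 2 * α) / β ≤ xCut G x U)) :
    1 ≤ xCut G (fun e => α * (if e ∈ J.edgeSet then 1 else 0) + β * x e) U :=
  stmt7_general G T x heven J hJG hJtree D hD α β hα hβ hαβ U hU1 hU2 hcase
end

section
/- Let G=(V,E) be a graph, T ⊆ V of even cardinality, and t̂ ∈ T a fixed node. Let x* : E → ℝ satisfy x* ≥ 0 and the partition inequality x*(δ(P₁,…,P_k)) ≥ k−1 for every partition of V into nonempty sets P₁,…,P_k. Let 0 ≤ τ ≤ 1/2, let 𝓛 be the family of all T-odd τ-narrow subsets of V∖{t̂} (sets S ⊆ V∖{t̂} with |S∩T| odd and x*(δ(S)) < 1+τ), and let 𝓛′ ⊆ 𝓛 be any subfamily. For U ∈ 𝓛′ define g_{𝓛′}(U) = { v ∈ U : v ∉ W for every W ∈ 𝓛′ with W ⊊ U }. Then the family of sets { g_{𝓛′}(U) : U ∈ 𝓛′ } together with V ∖ ⋃_{W∈𝓛′} W forms a partition of V, and every set in this family is nonempty. -/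
open Finset
open scoped Classical

variable {V : Type*}

/-!
If two `T`-odd sets `A`, `B` avoiding `t̂` cross, then either `A ∩ B` and `A ∪ B`, or `A \ B`
and `B \ A`, are `T`-even proper nonempty sets, so by (posi)submodularity of the cut function
`x(δ(A)) + x(δ(B)) ≥ 4`; narrow sets have cut value below `3/2`, hence `𝓛'` is laminar. For a
laminar family the sets `g(U)` are disjoint and cover `⋃ 𝓛'` (a point lies in `g(U)` for a
minimal `U` containing it), and `t̂ ∉ ⋃ 𝓛'`. If `g(U)` were empty, the maximal members of `𝓛'`
inside `U` would partition `U`; by parity there are an odd number `k ≥ 3` of them, and the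
partition inequality for them together with `V ∖ U` gives `k < 3(k + 1)/4`, i.e. `k < 3`.
-/

section Cut

variable [Fintype V] [DecidableEq V] (G : SimpleGraph V) (x : Sym2 V → ℝ)

lemma xCut_eq_sum_ite (U : Finset V) :
    xCut G x U =
      ∑ u, ∑ w, if u ∈ U ∧ w ∉ U then (if G.Adj u w then x s(u, w) else 0) else 0 := by
  simp only [xCut, ite_and, ← mem_compl, sum_ite_irrel, sum_const_zero,
    Fintype.sum_ite_mem]

lemma xCut_compl (U : Finset V) : xCut G x Uᶜ = xCut G x U := by
  rw [xCut_eq_sum_ite, xCut_eq_sum_ite, sum_comm]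
  refine sum_congr rfl fun u _ => sum_congr rfl fun w _ => ?_
  simp only [mem_compl, not_not, G.adj_comm w u, Sym2.eq_swap (a := w), and_comm]

variable {G x}

lemma xCut_inter_add_xCut_union_le (hx0 : ∀ e ∈ G.edgeSet, 0 ≤ x e) (A B : Finset V) :
    xCut G x (A ∩ B) + xCut G x (A ∪ B) ≤ xCut G x A + xCut G x B := by
  simp only [xCut_eq_sum_ite, ← sum_add_distrib]
  refine sum_le_sum fun u _ => sum_le_sum fun w _ => ?_
  have hc : 0 ≤ if G.Adj u w then x s(u, w) else 0 := by
    split_ifs with h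
    exacts [hx0 _ h, le_rfl]
  by_cases u ∈ A <;> by_cases u ∈ B <;> by_cases w ∈ A <;> by_cases w ∈ B <;> simp_all

lemma xCut_sdiff_add_xCut_sdiff_le (hx0 : ∀ e ∈ G.edgeSet, 0 ≤ x e) (A B : Finset V) :
    xCut G x (A \ B) + xCut G x (B \ A) ≤ xCut G x A + xCut G x B := by
  have h := xCut_inter_add_xCut_union_le hx0 A Bᶜ
  rwa [← sdiff_eq_inter_compl, ← xCut_compl G x (A ∪ Bᶜ), compl_union, compl_compl,
    inter_comm, ← sdiff_eq_inter_compl, xCut_compl] at h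

end Cut

section Laminar

variable {α : Type*} [DecidableEq α]

def IsLaminar (L : Finset (Finset α)) : Prop :=
  ∀ A ∈ L, ∀ B ∈ L, A ⊆ B ∨ B ⊆ A ∨ Disjoint A B

/-- The paper's `g_L(U)`. -/
def ownPart (L : Finset (Finset α)) (U : Finset α) : Finset α :=
  U.filter fun v => ∀ W ∈ L, W ⊂ U → v ∉ W

noncomputable def children (L : Finset (Finset α)) (U : Finset α) : Finset (Finset α) :=
  (L.filter (· ⊂ U)).filter (Maximal (· ∈ L.filter (· ⊂ U)))

variable {L : Finset (Finset α)} {U : Finset α}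

lemma ownPart_subset : ownPart L U ⊆ U := filter_subset _ _

lemma disjoint_ownPart (hL : IsLaminar L) {U₁ U₂ : Finset α} (h₁ : U₁ ∈ L) (h₂ : U₂ ∈ L)
    (hne : U₁ ≠ U₂) : Disjoint (ownPart L U₁) (ownPart L U₂) := by
  rcases hL U₁ h₁ U₂ h₂ with h | h | h
  · refine disjoint_left.mpr fun v hv₁ hv₂ => ?_
    exact (mem_filter.mp hv₂).2 U₁ h₁ (h.ssubset_of_ne hne) (ownPart_subset hv₁)
  · refine disjoint_left.mpr fun v hv₁ hv₂ => ?_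
    exact (mem_filter.mp hv₁).2 U₂ h₂ (h.ssubset_of_ne hne.symm) (ownPart_subset hv₂)
  · exact h.mono ownPart_subset ownPart_subset

lemma biUnion_ownPart : L.biUnion (ownPart L) = L.biUnion id := by
  refine (biUnion_mono fun U _ => ownPart_subset).antisymm fun v hv => ?_
  obtain ⟨W, hW, hvW⟩ := mem_biUnion.mp hv
  obtain ⟨U, hUW, hUmin⟩ := (L.filter (v ∈ ·)).exists_le_minimal (mem_filter.mpr ⟨hW, hvW⟩)
  obtain ⟨hU, hvU⟩ := mem_filter.mp hUmin.prop
  refine mem_biUnion.mpr ⟨U, hU, mem_filter.mpr ⟨hvU, fun W' hW' hW'U hvW' => ?_⟩⟩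
  exact hW'U.ne (hUmin.eq_of_le (mem_filter.mpr ⟨hW', hvW'⟩) hW'U.subset)

lemma mem_children {W : Finset α} (hW : W ∈ children L U) : W ∈ L ∧ W ⊂ U :=
  mem_filter.mp (mem_filter.mp hW).1

lemma pairwiseDisjoint_children (hL : IsLaminar L) :
    (children L U : Set (Finset α)).PairwiseDisjoint id := by
  intro W₁ h₁ W₂ h₂ hne
  have hmax₁ := (mem_filter.mp (mem_coe.mp h₁)).2
  have hmax₂ := (mem_filter.mp (mem_coe.mp h₂)).2
  rcases hL W₁ (mem_filter.mp hmax₁.prop).1 W₂ (mem_filter.mp hmax₂.prop).1 with h | h | h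
  · exact absurd (hmax₁.eq_of_le hmax₂.prop h) hne
  · exact absurd (hmax₂.eq_of_le hmax₁.prop h).symm hne
  · exact h

lemma biUnion_children_of_ownPart_eq_empty (h : ownPart L U = ∅) :
    (children L U).biUnion id = U := by
  refine (biUnion_subset.mpr fun W hW => (mem_children hW).2.subset).antisymm fun v hv => ?_
  have hcovered : ∃ W ∈ L, W ⊂ U ∧ v ∈ W := by
    by_contra! hfree
    exact notMem_empty v (h ▸ mem_filter.mpr ⟨hv, hfree⟩)
  obtain ⟨W, hWL, hWU, hvW⟩ := hcovered
  obtain ⟨W', hWW', hmax⟩ := (L.filter (· ⊂ U)).exists_le_maximal (mem_filter.mpr ⟨hWL, hWU⟩)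
  exact mem_biUnion.mpr ⟨W', mem_filter.mpr ⟨hmax.prop, hmax⟩, hWW' hvW⟩

lemma nonempty_of_odd_card_inter {S T : Finset α} (h : Odd #(S ∩ T)) : S.Nonempty :=
  (card_pos.mp h.pos).mono inter_subset_left

lemma odd_card_biUnion_inter_iff {M : Finset (Finset α)} {T : Finset α}
    (hdisj : (M : Set (Finset α)).PairwiseDisjoint id) (hodd : ∀ W ∈ M, Odd #(W ∩ T)) :
    Odd #(M.biUnion id ∩ T) ↔ Odd #M := by
  rw [biUnion_inter, card_biUnion (hdisj.mono fun W => inter_subset_left),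
    odd_sum_iff_odd_card_odd]
  simp only [id_eq]
  rw [filter_true_of_mem hodd]

end Laminar

section NarrowCuts

variable [Fintype V] [DecidableEq V] {G : SimpleGraph V} {x : Sym2 V → ℝ} {T : Finset V}

lemma subset_or_subset_or_disjoint_of_odd (hx0 : ∀ e ∈ G.edgeSet, 0 ≤ x e)
    (heven : ∀ S : Finset V, S.Nonempty → S ≠ univ → Even #(S ∩ T) → 2 ≤ xCut G x S)
    {A B : Finset V} (hA : Odd #(A ∩ T)) (hB : Odd #(B ∩ T)) (hAB : A ∪ B ≠ univ)
    (hcut : xCut G x A + xCut G x B < 4) : A ⊆ B ∨ B ⊆ A ∨ Disjoint A B := by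
  by_contra! ⟨hAB', hBA', hcross⟩
  have hproper : ∀ S ⊆ A ∪ B, S ≠ univ := fun S hS h => hAB (univ_subset_iff.mp (h ▸ hS))
  have hinter : (A ∩ B).Nonempty := not_disjoint_iff_nonempty_inter.mp hcross
  have hunion : #((A ∪ B) ∩ T) + #((A ∩ B) ∩ T) = #(A ∩ T) + #(B ∩ T) := by
    rw [union_inter_distrib_right, inter_inter_distrib_right, card_union_add_card_inter]
  have hsdiff (S R : Finset V) : #((S \ R) ∩ T) + #((S ∩ R) ∩ T) = #(S ∩ T) := by
    rw [sdiff_inter_right_comm, inter_right_comm S R T, card_sdiff_add_card_inter]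
  rcases Nat.even_or_odd #((A ∩ B) ∩ T) with h | h
  · have h₁ := heven _ hinter (hproper _ (inter_subset_left.trans subset_union_left)) h
    have h₂ := heven _ (hinter.mono (inter_subset_left.trans subset_union_left)) (hproper _ le_rfl)
      ((Nat.even_add.mp (hunion ▸ hA.add_odd hB)).mpr h)
    linarith [xCut_inter_add_xCut_union_le hx0 A B]
  · have h₁ := heven _ (sdiff_nonempty.mpr hAB') (hproper _ (sdiff_subset.trans subset_union_left))
      ((Nat.odd_add'.mp (hsdiff A B ▸ hA)).mp h)
    have h₂ := heven _ (sdiff_nonempty.mpr hBA') (hproper _ (sdiff_subset.trans subset_union_right))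
      ((Nat.odd_add'.mp (hsdiff B A ▸ hB)).mp (inter_comm A B ▸ h))
    linarith [xCut_sdiff_add_xCut_sdiff_le hx0 A B]

lemma card_le_of_partition
    (hpart : ∀ P : Finset (Finset V), (∀ p ∈ P, p.Nonempty) →
      (P : Set (Finset V)).PairwiseDisjoint id → P.biUnion id = univ →
      (P.card : ℝ) - 1 ≤ (∑ p ∈ P, xCut G x p) / 2)
    {U : Finset V} (hU : U ≠ univ) {M : Finset (Finset V)} (hne : ∀ W ∈ M, W.Nonempty)
    (hdisj : (M : Set (Finset V)).PairwiseDisjoint id) (hcover : M.biUnion id = U) :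
    (#M : ℝ) ≤ (xCut G x U + ∑ W ∈ M, xCut G x W) / 2 := by
  have hUc : Uᶜ.Nonempty := by rwa [nonempty_iff_ne_empty, Ne, compl_eq_empty_iff]
  have hsub : ∀ W ∈ M, W ⊆ U := fun W hW => hcover ▸ subset_biUnion_of_mem id hW
  have hUcM : Uᶜ ∉ M := fun h => by
    obtain ⟨v, hv⟩ := hUc
    exact mem_compl.mp hv (hsub _ h hv)
  have := hpart (insert Uᶜ M) (forall_mem_insert _ _ _ |>.mpr ⟨hUc, hne⟩)
    (by
      rw [coe_insert]
      exact hdisj.insert fun W hW _ => disjoint_compl_left.mono_right (hsub W hW))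
    (by rw [biUnion_insert, hcover]; exact compl_sup_eq_top)
  rwa [card_insert_of_notMem hUcM, sum_insert hUcM, xCut_compl, Nat.cast_add, Nat.cast_one,
    add_sub_cancel_right] at this

lemma ownPart_nonempty
    (hpart : ∀ P : Finset (Finset V), (∀ p ∈ P, p.Nonempty) →
      (P : Set (Finset V)).PairwiseDisjoint id → P.biUnion id = univ →
      (P.card : ℝ) - 1 ≤ (∑ p ∈ P, xCut G x p) / 2)
    {L : Finset (Finset V)} (hL : IsLaminar L) (hodd : ∀ S ∈ L, Odd #(S ∩ T))
    (hcut : ∀ S ∈ L, xCut G x S < 3 / 2) {U : Finset V} (hU : U ∈ L) (hUuniv : U ≠ univ) :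
    (ownPart L U).Nonempty := by
  rw [nonempty_iff_ne_empty]
  intro hempty
  have hcover := biUnion_children_of_ownPart_eq_empty hempty
  have hdisj := pairwiseDisjoint_children (U := U) hL
  have hModd : Odd #(children L U) := by
    rw [← odd_card_biUnion_inter_iff hdisj fun W hW => hodd W (mem_children hW).1, hcover]
    exact hodd U hU
  have hM3 : 3 ≤ #(children L U) := by
    have hne1 : #(children L U) ≠ 1 := fun h => by
      obtain ⟨W, hW⟩ := card_eq_one.mp h
      have hWU := (mem_children (hW ▸ mem_singleton_self W)).2
      rw [hW, singleton_biUnion] at hcover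
      exact hWU.ne hcover
    obtain ⟨k, hk⟩ := hModd
    omega
  have hsum : ∑ W ∈ children L U, xCut G x W ≤ #(children L U) * (3 / 2) := by
    simpa using sum_le_card_nsmul _ _ _ fun W hW => (hcut W (mem_children hW).1).le
  have hpartU := card_le_of_partition hpart hUuniv
    (fun W hW => nonempty_of_odd_card_inter (hodd W (mem_children hW).1)) hdisj hcover
  have hM3' : (3 : ℝ) ≤ #(children L U) := mod_cast hM3
  linarith [hcut U hU]

end NarrowCuts

theorem stmt9_general {V : Type*} [Fintype V] [DecidableEq V]
    (G : SimpleGraph V)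
    (T : Finset V)
    (that : V)
    (x : Sym2 V → ℝ) (hx0 : ∀ e ∈ G.edgeSet, 0 ≤ x e)
    -- the partition inequality, satisfied by fractional spanning trees
    (hpart : ∀ P : Finset (Finset V), (∀ p ∈ P, p.Nonempty) →
      (P : Set (Finset V)).PairwiseDisjoint id → P.biUnion id = univ →
      (P.card : ℝ) - 1 ≤ (∑ p ∈ P, xCut G x p) / 2)
    -- every nonempty proper T-even cut has x-value at least 2 (this makes the
    -- family of T-odd τ-narrow cuts laminar)
    (heven : ∀ S : Finset V, S.Nonempty → S ≠ univ → Even ((S ∩ T).card) →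
      2 ≤ xCut G x S)
    (τ : ℝ) (hτ : τ ≤ 1 / 2)
    -- L' is a subfamily of the family of all T-odd τ-narrow subsets of V \ {t̂}
    (L' : Finset (Finset V))
    (hL' : ∀ S ∈ L', S ⊆ univ.erase that ∧ Odd ((S ∩ T).card) ∧ xCut G x S < 1 + τ) :
    (∀ U ∈ L', (U.filter (fun v => ∀ W ∈ L', W ⊂ U → v ∉ W)).Nonempty) ∧
    (univ \ L'.biUnion id).Nonempty ∧
    (∀ U₁ ∈ L', ∀ U₂ ∈ L', U₁ ≠ U₂ →
      Disjoint (U₁.filter (fun v => ∀ W ∈ L', W ⊂ U₁ → v ∉ W))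
        (U₂.filter (fun v => ∀ W ∈ L', W ⊂ U₂ → v ∉ W))) ∧
    (∀ U ∈ L', Disjoint (U.filter (fun v => ∀ W ∈ L', W ⊂ U → v ∉ W))
        (univ \ L'.biUnion id)) ∧
    ((univ \ L'.biUnion id) ∪
        L'.biUnion (fun U => U.filter (fun v => ∀ W ∈ L', W ⊂ U → v ∉ W)) = univ) := by
  have hthat : ∀ S ∈ L', that ∉ S := fun S hS h => by simpa using (hL' S hS).1 h
  have hodd : ∀ S ∈ L', Odd #(S ∩ T) := fun S hS => (hL' S hS).2.1
  have hcut : ∀ S ∈ L', xCut G x S < 3 / 2 := fun S hS => by linarith [(hL' S hS).2.2]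
  have hlam : IsLaminar L' := fun A hA B hB =>
    subset_or_subset_or_disjoint_of_odd hx0 heven (hodd A hA) (hodd B hB)
      (ne_of_mem_of_not_mem' (mem_univ that) (by simp [hthat A hA, hthat B hB])).symm
      (by linarith [hcut A hA, hcut B hB])
  -- the filters in the statement carry a different decidability instance
  have hown (U : Finset V) :
      ownPart L' U = U.filter (fun v => ∀ W ∈ L', W ⊂ U → v ∉ W) := by
    unfold ownPart
    congr
  simp only [← hown]
  refine ⟨fun U hU => ownPart_nonempty hpart hlam hodd hcut hU
      (ne_of_mem_of_not_mem' (mem_univ that) (hthat U hU)).symm,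
    ⟨that, by simpa using hthat⟩,
    fun U₁ h₁ U₂ h₂ hne => disjoint_ownPart hlam h₁ h₂ hne,
    fun U hU => disjoint_sdiff.mono_left (ownPart_subset.trans (subset_biUnion_of_mem id hU)), ?_⟩
  rw [biUnion_ownPart]
  exact sdiff_union_of_subset (subset_univ _)

theorem stmt9 {V : Type*} [Fintype V] [DecidableEq V]
    (G : SimpleGraph V)
    (T : Finset V) (hTeven : Even T.card)
    (that : V) (hthat : that ∈ T)
    (x : Sym2 V → ℝ) (hx0 : ∀ e ∈ G.edgeSet, 0 ≤ x e)
    -- the partition inequality, satisfied by fractional spanning trees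
    (hpart : ∀ P : Finset (Finset V), (∀ p ∈ P, p.Nonempty) →
      (P : Set (Finset V)).PairwiseDisjoint id → P.biUnion id = univ →
      (P.card : ℝ) - 1 ≤ (∑ p ∈ P, xCut G x p) / 2)
    -- every nonempty proper T-even cut has x-value at least 2 (this makes the
    -- family of T-odd τ-narrow cuts laminar)
    (heven : ∀ S : Finset V, S.Nonempty → S ≠ univ → Even ((S ∩ T).card) →
      2 ≤ xCut G x S)
    (τ : ℝ) (hτ0 : 0 ≤ τ) (hτ : τ ≤ 1 / 2)
    -- L' is a subfamily of the family of all T-odd τ-narrow subsets of V \ {t̂}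
    (L' : Finset (Finset V))
    (hL' : ∀ S ∈ L', S ⊆ univ.erase that ∧ Odd ((S ∩ T).card) ∧ xCut G x S < 1 + τ) :
    (∀ U ∈ L', (U.filter (fun v => ∀ W ∈ L', W ⊂ U → v ∉ W)).Nonempty) ∧
    (univ \ L'.biUnion id).Nonempty ∧
    (∀ U₁ ∈ L', ∀ U₂ ∈ L', U₁ ≠ U₂ →
      Disjoint (U₁.filter (fun v => ∀ W ∈ L', W ⊂ U₁ → v ∉ W))
        (U₂.filter (fun v => ∀ W ∈ L', W ⊂ U₂ → v ∉ W))) ∧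
    (∀ U ∈ L', Disjoint (U.filter (fun v => ∀ W ∈ L', W ⊂ U → v ∉ W))
        (univ \ L'.biUnion id)) ∧
    ((univ \ L'.biUnion id) ∪
        L'.biUnion (fun U => U.filter (fun v => ∀ W ∈ L', W ⊂ U → v ∉ W)) = univ) :=
  stmt9_general G T that x hx0 hpart heven τ hτ L' hL'
end
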